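/- arXiv:1604.06500 — 5 statements merged into one kernel-verified Lean document; each statement's English description precedes it below -/
import Mathlib

section
/- For the discretized truncated model D' on {1,…,N}, the evolution d/dt f_i = h Σ_{j=1}^{i−1} f_{i−j} f_j − 2h f_i Σ_{j=1}^{N−i} f_j − f_i + 2 Σ_{j=i}^{N} f_j/(j+1) conserves the discrete mass Σ_{i=1}^N i f_i. -/
/-!
Write `D_i` for the right-hand side of the equation for `f_i`, so the mass has derivative
`∑ i D_i`. The coagulation gain `∑_i i ∑_{a+b=i} f_a f_b` is a sum of `(a + b) f_a f_b` over the
pairs with `a + b ≤ N`; since this set of pairs is symmetric, it equals twice `∑ a f_a f_b`,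
which is exactly the coagulation loss. In the fragmentation term, exchanging the sums puts the
weight `2 (1 + ⋯ + j) / (j + 1) = j` on `f_j`, which cancels the linear loss `∑ i f_i`.
-/

open Finset

section Combinatorics

variable {R : Type*}

theorem two_mul_sum_Icc_one_natCast [CommSemiring R] (n : ℕ) :
    2 * ∑ i ∈ Icc 1 n, (i : R) = n * (n + 1) := by
  induction n with
  | zero => simp
  | succ n ih =>
    rw [sum_Icc_succ_top (by omega), mul_add, ih]
    push_cast
    ring

theorem sum_Icc_sum_Icc_sub_comm [AddCommMonoid R] (N : ℕ) (F : ℕ → ℕ → R) :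
    ∑ a ∈ Icc 1 N, ∑ b ∈ Icc 1 (N - a), F a b = ∑ a ∈ Icc 1 N, ∑ b ∈ Icc 1 (N - a), F b a :=
  sum_comm' fun a b => by simp only [mem_Icc]; omega

theorem sum_Icc_mul_sum_Ico_eq_sum_pairs [CommSemiring R] (N : ℕ) (g : ℕ → R) :
    ∑ i ∈ Icc 1 N, (i : R) * ∑ j ∈ Ico 1 i, g (i - j) * g j
      = ∑ a ∈ Icc 1 N, ∑ b ∈ Icc 1 (N - a), ((a : R) + b) * (g a * g b) := by
  simp_rw [mul_sum]
  rw [sum_sigma', sum_sigma']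
  refine sum_nbij' (fun x => ⟨x.1 - x.2, x.2⟩) (fun x => ⟨x.1 + x.2, x.2⟩) ?_ ?_ ?_ ?_ ?_
  all_goals
    rintro ⟨a, b⟩ hab
    simp only [mem_sigma, mem_Icc, mem_Ico] at hab ⊢
  · omega
  · omega
  · rw [Nat.sub_add_cancel hab.2.2.le]
  · rw [Nat.add_sub_cancel]
  · rw [← Nat.cast_add, Nat.sub_add_cancel hab.2.2.le]

theorem sum_Icc_mul_sum_Ico_eq_two_mul_sum [CommSemiring R] (N : ℕ) (g : ℕ → R) :
    ∑ i ∈ Icc 1 N, (i : R) * ∑ j ∈ Ico 1 i, g (i - j) * g j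
      = ∑ i ∈ Icc 1 N, 2 * (i : R) * g i * ∑ j ∈ Icc 1 (N - i), g j := by
  rw [sum_Icc_mul_sum_Ico_eq_sum_pairs]
  calc ∑ a ∈ Icc 1 N, ∑ b ∈ Icc 1 (N - a), ((a : R) + b) * (g a * g b)
      = ∑ a ∈ Icc 1 N, ∑ b ∈ Icc 1 (N - a), (a : R) * (g a * g b)
          + ∑ a ∈ Icc 1 N, ∑ b ∈ Icc 1 (N - a), (b : R) * (g a * g b) := by
        simp only [add_mul, sum_add_distrib]
    _ = ∑ a ∈ Icc 1 N, ∑ b ∈ Icc 1 (N - a), (a : R) * (g a * g b)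
          + ∑ a ∈ Icc 1 N, ∑ b ∈ Icc 1 (N - a), (a : R) * (g b * g a) := by
        rw [sum_Icc_sum_Icc_sub_comm N fun a b => (b : R) * (g a * g b)]
    _ = _ := by
        rw [← sum_add_distrib]
        refine sum_congr rfl fun a _ => ?_
        rw [← sum_add_distrib, mul_sum]
        exact sum_congr rfl fun b _ => by ring

theorem sum_Icc_mul_two_mul_sum_Icc_div [Field R] [CharZero R] (N : ℕ) (g : ℕ → R) :
    ∑ i ∈ Icc 1 N, (i : R) * (2 * ∑ j ∈ Icc i N, g j / ((j : R) + 1))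
      = ∑ j ∈ Icc 1 N, (j : R) * g j := by
  simp_rw [mul_sum]
  rw [sum_comm' (t' := Icc 1 N) (s' := fun j => Icc 1 j) fun i j => by simp only [mem_Icc]; omega]
  refine sum_congr rfl fun j _ => ?_
  have hj : (j : R) + 1 ≠ 0 := by exact_mod_cast j.succ_ne_zero
  rw [← sum_mul, mul_left_comm, ← mul_assoc, two_mul_sum_Icc_one_natCast]
  field_simp

end Combinatorics

theorem stmt_2_general (N : ℕ) (h : ℝ) (f : ℝ → ℕ → ℝ)
    (hODE : ∀ t : ℝ, ∀ i, 1 ≤ i → i ≤ N →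
      HasDerivAt (fun s => f s i)
        (h * (∑ j ∈ Finset.Ico 1 i, f t (i - j) * f t j)
          - 2 * h * f t i * (∑ j ∈ Finset.Icc 1 (N - i), f t j)
          - f t i + 2 * ∑ j ∈ Finset.Icc i N, f t j / ((j : ℝ) + 1)) t) :
    ∀ t : ℝ, HasDerivAt (fun s => ∑ i ∈ Finset.Icc 1 N, (i : ℝ) * f s i) 0 t := by
  intro t
  have hmass := HasDerivAt.fun_sum fun i (hi : i ∈ Icc 1 N) =>
    (hODE t i (mem_Icc.1 hi).1 (mem_Icc.1 hi).2).const_mul (i : ℝ)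
  refine hmass.congr_deriv ?_
  have hweighted : ∀ i ∈ Icc 1 N, (i : ℝ) * (h * (∑ j ∈ Ico 1 i, f t (i - j) * f t j)
      - 2 * h * f t i * (∑ j ∈ Icc 1 (N - i), f t j)
      - f t i + 2 * ∑ j ∈ Icc i N, f t j / ((j : ℝ) + 1))
      = h * ((i : ℝ) * ∑ j ∈ Ico 1 i, f t (i - j) * f t j)
        - h * (2 * (i : ℝ) * f t i * ∑ j ∈ Icc 1 (N - i), f t j)
        - (i : ℝ) * f t i + (i : ℝ) * (2 * ∑ j ∈ Icc i N, f t j / ((j : ℝ) + 1)) :=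
    fun i _ => by ring
  rw [sum_congr rfl hweighted, sum_add_distrib, sum_sub_distrib, sum_sub_distrib, ← mul_sum,
    ← mul_sum, sum_Icc_mul_sum_Ico_eq_two_mul_sum, sum_Icc_mul_two_mul_sum_Icc_div]
  ring

/-- The truncated discretized model D' conserves the discrete mass `∑_{i=1}^N i f_i`. -/
theorem stmt_2 (N : ℕ) (h : ℝ) (hh : 0 < h) (f : ℝ → ℕ → ℝ)
    (hODE : ∀ t : ℝ, ∀ i, 1 ≤ i → i ≤ N →
      HasDerivAt (fun s => f s i)
        (h * (∑ j ∈ Finset.Ico 1 i, f t (i - j) * f t j)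
          - 2 * h * f t i * (∑ j ∈ Finset.Icc 1 (N - i), f t j)
          - f t i + 2 * ∑ j ∈ Finset.Icc i N, f t j / ((j : ℝ) + 1)) t) :
    ∀ t : ℝ, HasDerivAt (fun s => ∑ i ∈ Finset.Icc 1 N, (i : ℝ) * f s i) 0 t :=
  stmt_2_general N h f hODE
end

section
/- For any f ∈ L¹([0,L]) and ψ ∈ L¹([0,L]), the linearized operator W_f ψ = T ψ − 2 q(f, ψ), where q(f,ψ)(x) = ∫_0^x f(y) ψ(x−y) dy − ψ(x)∫_0^{L−x} f(y) dy − f(x)∫_0^{L−x} ψ(y) dy, has range contained in the annihilator of x: ∫_0^L x (W_f ψ)(x) dx = 0. -/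
/-!
The two terms of `x · Tψ` cancel after integration, because by Fubini
`∫₀ᴸ x ∫ₓᴸ ψ(y)/y dy dx = ½ ∫₀ᴸ y ψ(y) dy`. The three terms of `q(f, ψ)` cancel among themselves:
substituting `x = y + z`, the first moment of the truncated convolution is the integral of
`(y + z) f(y) ψ(z)` over the triangle `y, z ≥ 0, y + z ≤ L`, and Fubini on that triangle identifies
its two halves with the first moments of the other two terms.
-/

open MeasureTheory Set

theorem MeasureTheory.Integrable.ite_le {α : Type*} [MeasurableSpace α] {μ : Measure α}
    {k : α → ℝ} (hk : Integrable k μ) {a b : α → ℝ} (ha : Measurable a) (hb : Measurable b) :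
    Integrable (fun p => if a p ≤ b p then k p else 0) μ := by
  refine (hk.indicator (measurableSet_le ha hb)).congr (ae_of_all _ fun p => ?_)
  simp only [indicator_apply, mem_ofPred_eq]

theorem integral_eq_integral_of_prod_sections {α β : Type*} [MeasurableSpace α]
    [MeasurableSpace β] {μ : Measure α} {ν : Measure β} [SFinite μ] [SFinite ν]
    {K : α × β → ℝ} (hK : Integrable K (μ.prod ν)) {F : α → ℝ} {G : β → ℝ}
    (hF : ∀ᵐ x ∂μ, ∫ y, K (x, y) ∂ν = F x) (hG : ∀ᵐ y ∂ν, ∫ x, K (x, y) ∂μ = G y) :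
    ∫ x, F x ∂μ = ∫ y, G y ∂ν := by
  rw [← integral_congr_ae hF, ← integral_congr_ae hG]
  exact integral_integral_swap hK

variable {L : ℝ} {g h ψ : ℝ → ℝ}

theorem ae_mem_Icc_prod :
    ∀ᵐ p ∂(volume.restrict (Icc 0 L)).prod (volume.restrict (Icc 0 L)),
      p.1 ∈ Icc 0 L ∧ p.2 ∈ Icc 0 L := by
  rw [Measure.prod_restrict]
  exact ae_restrict_mem (measurableSet_Icc.prod measurableSet_Icc)

theorem setIntegral_Icc_ite_le {a c : ℝ} (hc : c ≤ L) (k : ℝ → ℝ) :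
    ∫ y in Icc a L, (if y ≤ c then k y else 0) = ∫ y in Icc a c, k y := by
  have hIcc : Icc a L ∩ Iic c = Icc a c := by
    rw [← Ici_inter_Iic, inter_assoc, Iic_inter_Iic, inf_eq_right.2 hc, Ici_inter_Iic]
  rw [← hIcc, ← setIntegral_indicator measurableSet_Iic]
  simp only [indicator_apply, mem_Iic]

theorem setIntegral_Icc_ite_ge {a c : ℝ} (hc : a ≤ c) (k : ℝ → ℝ) :
    ∫ y in Icc a L, (if c ≤ y then k y else 0) = ∫ y in Icc c L, k y := by
  have hIcc : Icc a L ∩ Ici c = Icc c L := by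
    rw [← Ici_inter_Iic, inter_right_comm, Ici_inter_Ici, sup_eq_right.2 hc, Ici_inter_Iic]
  rw [← hIcc, ← setIntegral_indicator measurableSet_Ici]
  simp only [indicator_apply, mem_Ici]

theorem setIntegral_Icc_comp_sub {y : ℝ} (hy : y ≤ L) (k : ℝ → ℝ) :
    ∫ x in Icc y L, k (x - y) = ∫ z in Icc 0 (L - y), k z := by
  rw [integral_Icc_eq_integral_Ioc, integral_Icc_eq_integral_Ioc,
    ← intervalIntegral.integral_of_le hy, ← intervalIntegral.integral_of_le (sub_nonneg.2 hy),
    intervalIntegral.integral_comp_sub_right, sub_self]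

theorem setIntegral_Icc_id {c : ℝ} (hc : 0 ≤ c) : ∫ x in Icc 0 c, x = c ^ 2 / 2 := by
  rw [integral_Icc_eq_integral_Ioc, ← intervalIntegral.integral_of_le hc, integral_id]
  ring

theorem MeasureTheory.IntegrableOn.id_mul {a b : ℝ} (hg : IntegrableOn g (Icc a b)) :
    IntegrableOn (fun x => x * g x) (Icc a b) :=
  hg.continuousOn_mul continuousOn_id isCompact_Icc

theorem setIntegral_ite_add_le_mul_left {x : ℝ} (hx : x ∈ Icc 0 L) :
    ∫ y in Icc 0 L, (if x + y ≤ L then g x * h y else 0) = g x * ∫ y in Icc 0 (L - x), h y := by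
  simp_rw [← le_sub_iff_add_le']
  rw [setIntegral_Icc_ite_le (by linarith [hx.1]) (fun y => g x * h y), integral_const_mul]

theorem setIntegral_ite_add_le_mul_right {y : ℝ} (hy : y ∈ Icc 0 L) :
    ∫ x in Icc 0 L, (if x + y ≤ L then g x * h y else 0) = h y * ∫ x in Icc 0 (L - y), g x := by
  simp_rw [← le_sub_iff_add_le]
  rw [setIntegral_Icc_ite_le (by linarith [hy.1]) (fun x => g x * h y), integral_mul_const,
    mul_comm]

theorem integrableOn_mul_integral_Icc_sub (hg : IntegrableOn g (Icc 0 L))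
    (hh : IntegrableOn h (Icc 0 L)) :
    IntegrableOn (fun x => g x * ∫ y in Icc 0 (L - x), h y) (Icc 0 L) :=
  ((hg.mul_prod hh).ite_le (measurable_fst.add measurable_snd)
    measurable_const).integral_prod_left.congr
    (ae_restrict_of_forall_mem measurableSet_Icc fun _ hx => setIntegral_ite_add_le_mul_left hx)

theorem integral_mul_integral_Icc_sub_comm (hg : IntegrableOn g (Icc 0 L))
    (hh : IntegrableOn h (Icc 0 L)) :
    ∫ x in Icc 0 L, g x * ∫ y in Icc 0 (L - x), h y =
      ∫ y in Icc 0 L, h y * ∫ x in Icc 0 (L - y), g x :=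
  integral_eq_integral_of_prod_sections
    ((hg.mul_prod hh).ite_le (measurable_fst.add measurable_snd) measurable_const)
    (ae_restrict_of_forall_mem measurableSet_Icc fun _ hx => setIntegral_ite_add_le_mul_left hx)
    (ae_restrict_of_forall_mem measurableSet_Icc fun _ hy => setIntegral_ite_add_le_mul_right hy)

-- On `x ≤ y` the weight `x / y` is at most `1`; `ψ y / y` itself need not be integrable.
theorem integrable_ite_le_div_mul (hψ : IntegrableOn ψ (Icc 0 L)) :
    Integrable (fun p : ℝ × ℝ => (if p.1 ≤ p.2 then p.1 / p.2 else 0) * ψ p.2)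
      ((volume.restrict (Icc 0 L)).prod (volume.restrict (Icc 0 L))) := by
  refine (hψ.comp_snd _).bdd_mul (c := 1) ?_ ?_
  · exact (Measurable.ite (measurableSet_le measurable_fst measurable_snd)
      (measurable_fst.div measurable_snd) measurable_const).aestronglyMeasurable
  · filter_upwards [ae_mem_Icc_prod] with p hp
    split_ifs with hle
    · rw [norm_div, Real.norm_of_nonneg hp.1.1, Real.norm_of_nonneg (hp.1.1.trans hle)]
      exact div_le_one_of_le₀ hle (hp.1.1.trans hle)
    · simp

theorem setIntegral_ite_le_div_mul_left {x : ℝ} (hx : x ∈ Icc 0 L) :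
    ∫ y in Icc 0 L, (if x ≤ y then x / y else 0) * ψ y = x * ∫ y in Icc x L, ψ y / y := by
  simp_rw [ite_mul, zero_mul]
  rw [setIntegral_Icc_ite_ge hx.1 (fun y => x / y * ψ y), ← integral_const_mul]
  simp_rw [mul_div_assoc', div_mul_eq_mul_div]

theorem setIntegral_ite_le_div_mul_right {y : ℝ} (hy : y ∈ Icc 0 L) :
    ∫ x in Icc 0 L, (if x ≤ y then x / y else 0) * ψ y = 2⁻¹ * (y * ψ y) := by
  rw [integral_mul_const, setIntegral_Icc_ite_le hy.2 (fun x => x / y), integral_div,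
    setIntegral_Icc_id hy.1]
  rcases eq_or_ne y 0 with rfl | hy0
  · simp
  · field_simp

theorem integrableOn_mul_integral_Icc_div (hψ : IntegrableOn ψ (Icc 0 L)) :
    IntegrableOn (fun x => x * ∫ y in Icc x L, ψ y / y) (Icc 0 L) :=
  (integrable_ite_le_div_mul hψ).integral_prod_left.congr
    (ae_restrict_of_forall_mem measurableSet_Icc fun _ hx => setIntegral_ite_le_div_mul_left hx)

theorem integral_mul_integral_Icc_div (hψ : IntegrableOn ψ (Icc 0 L)) :
    ∫ x in Icc 0 L, x * ∫ y in Icc x L, ψ y / y = 2⁻¹ * ∫ x in Icc 0 L, x * ψ x := by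
  rw [← integral_const_mul]
  exact integral_eq_integral_of_prod_sections (integrable_ite_le_div_mul hψ)
    (ae_restrict_of_forall_mem measurableSet_Icc fun _ hx => setIntegral_ite_le_div_mul_left hx)
    (ae_restrict_of_forall_mem measurableSet_Icc fun _ hy => setIntegral_ite_le_div_mul_right hy)

theorem integrable_ite_le_mul_conv (hg : IntegrableOn g (Icc 0 L))
    (hh : IntegrableOn h (Icc 0 L)) :
    Integrable (fun p : ℝ × ℝ => if p.2 ≤ p.1 then p.1 * (g p.2 * h (p.1 - p.2)) else 0)
      ((volume.restrict (Icc 0 L)).prod (volume.restrict (Icc 0 L))) := by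
  -- Integrability is inherited from the convolution integrand of the extensions by zero.
  have hGH : Integrable
      (fun p : ℝ × ℝ => indicator (Icc 0 L) g p.2 * indicator (Icc 0 L) h (p.1 - p.2))
      ((volume.restrict (Icc 0 L)).prod (volume.restrict (Icc 0 L))) := by
    have hconv := (hg.integrable_indicator measurableSet_Icc).convolution_integrand
      (ContinuousLinearMap.mul ℝ ℝ) (hh.integrable_indicator measurableSet_Icc)
    refine Integrable.mono_measure (by simpa using hconv) ?_
    rw [Measure.prod_restrict]
    exact Measure.restrict_le_self
  have hbdd : ∀ᵐ p ∂(volume.restrict (Icc 0 L)).prod (volume.restrict (Icc 0 L)), ‖p.1‖ ≤ L := by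
    filter_upwards [ae_mem_Icc_prod] with p hp
    rw [Real.norm_of_nonneg hp.1.1]
    exact hp.1.2
  refine ((hGH.bdd_mul measurable_fst.aestronglyMeasurable hbdd).ite_le measurable_snd
    measurable_fst).congr ?_
  filter_upwards [ae_mem_Icc_prod] with p ⟨hx, hy⟩
  split_ifs with hyx
  · have hxy : p.1 - p.2 ∈ Icc 0 L := ⟨sub_nonneg.2 hyx, by linarith [hx.2, hy.1]⟩
    rw [indicator_of_mem hy, indicator_of_mem hxy]
  · rfl

theorem setIntegral_ite_le_mul_conv_left {x : ℝ} (hx : x ∈ Icc 0 L) :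
    ∫ y in Icc 0 L, (if y ≤ x then x * (g y * h (x - y)) else 0) =
      x * ∫ y in Icc 0 x, g y * h (x - y) := by
  rw [setIntegral_Icc_ite_le hx.2 (fun y => x * (g y * h (x - y))), integral_const_mul]

theorem setIntegral_ite_le_mul_conv_right {y : ℝ} (hy : y ∈ Icc 0 L) :
    ∫ x in Icc 0 L, (if y ≤ x then x * (g y * h (x - y)) else 0) =
      g y * ∫ z in Icc 0 (L - y), (y + z) * h z := by
  rw [setIntegral_Icc_ite_ge hy.1 (fun x => x * (g y * h (x - y))),
    ← setIntegral_Icc_comp_sub hy.2 (fun z => (y + z) * h z), ← integral_const_mul]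
  congr 1 with x
  rw [add_sub_cancel]
  ring

theorem integrableOn_mul_integral_Icc_conv (hg : IntegrableOn g (Icc 0 L))
    (hh : IntegrableOn h (Icc 0 L)) :
    IntegrableOn (fun x => x * ∫ y in Icc 0 x, g y * h (x - y)) (Icc 0 L) :=
  (integrable_ite_le_mul_conv hg hh).integral_prod_left.congr
    (ae_restrict_of_forall_mem measurableSet_Icc fun _ hx => setIntegral_ite_le_mul_conv_left hx)

theorem integral_mul_integral_Icc_conv (hg : IntegrableOn g (Icc 0 L))
    (hh : IntegrableOn h (Icc 0 L)) :
    ∫ x in Icc 0 L, x * ∫ y in Icc 0 x, g y * h (x - y) =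
      (∫ y in Icc 0 L, y * g y * ∫ z in Icc 0 (L - y), h z) +
        ∫ y in Icc 0 L, g y * ∫ z in Icc 0 (L - y), z * h z := by
  have hsplit : ∀ y ∈ Icc 0 L, g y * ∫ z in Icc 0 (L - y), (y + z) * h z =
      y * g y * (∫ z in Icc 0 (L - y), h z) + g y * ∫ z in Icc 0 (L - y), z * h z := by
    intro y hy
    have hh' : IntegrableOn h (Icc 0 (L - y)) :=
      hh.mono_set (Icc_subset_Icc le_rfl (by linarith [hy.1]))
    simp_rw [add_mul]
    rw [integral_add (hh'.const_mul y) hh'.id_mul, integral_const_mul]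
    ring
  rw [← integral_add (integrableOn_mul_integral_Icc_sub hg.id_mul hh)
      (integrableOn_mul_integral_Icc_sub hg hh.id_mul),
    ← setIntegral_congr_fun measurableSet_Icc hsplit]
  exact integral_eq_integral_of_prod_sections (integrable_ite_le_mul_conv hg hh)
    (ae_restrict_of_forall_mem measurableSet_Icc fun _ hx => setIntegral_ite_le_mul_conv_left hx)
    (ae_restrict_of_forall_mem measurableSet_Icc fun _ hy => setIntegral_ite_le_mul_conv_right hy)

theorem stmt_6_general (L : ℝ) (f ψ : ℝ → ℝ)
    (hf : IntegrableOn f (Set.Icc 0 L))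
    (hψ : IntegrableOn ψ (Set.Icc 0 L)) :
    (∫ x in Set.Icc 0 L, x *
        ((ψ x - 2 * ∫ y in Set.Icc x L, ψ y / y)
          - 2 * ((∫ y in Set.Icc 0 x, f y * ψ (x - y))
              - ψ x * (∫ y in Set.Icc 0 (L - x), f y)
              - f x * ∫ y in Set.Icc 0 (L - x), ψ y))) = 0 := by
  have hC_eq : ∫ x in Icc 0 L, x * (ψ x * ∫ y in Icc 0 (L - x), f y) =
      ∫ y in Icc 0 L, f y * ∫ z in Icc 0 (L - y), z * ψ z := by
    simp_rw [← mul_assoc]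
    exact integral_mul_integral_Icc_sub_comm hψ.id_mul hf
  have hM := hψ.id_mul
  have hA := integrableOn_mul_integral_Icc_div hψ
  have hB := integrableOn_mul_integral_Icc_conv hf hψ
  have hC := integrableOn_mul_integral_Icc_sub hψ.id_mul hf
  have hD := integrableOn_mul_integral_Icc_sub hf.id_mul hψ
  simp_rw [mul_assoc] at hC hD
  unfold IntegrableOn at hM hA hB hC hD
  calc _ = ∫ x in Icc 0 L, (x * ψ x - 2 * (x * ∫ y in Icc x L, ψ y / y) -
          2 * (x * (∫ y in Icc 0 x, f y * ψ (x - y)) -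
            x * (ψ x * ∫ y in Icc 0 (L - x), f y) - x * (f x * ∫ y in Icc 0 (L - x), ψ y))) := by
        congr 1 with x
        ring
    _ = 0 := by
      rw [integral_sub, integral_sub, integral_const_mul, integral_const_mul, integral_sub,
        integral_sub, integral_mul_integral_Icc_div hψ, integral_mul_integral_Icc_conv hf hψ, hC_eq]
      · simp_rw [mul_assoc]
        ring
      all_goals fun_prop

/-- The range of the linearized operator `W_f ψ = T ψ - 2 q(f, ψ)` is contained
in the annihilator of `x`: `∫_0^L x (W_f ψ)(x) dx = 0`. -/
theorem stmt_6 (L : ℝ) (hL : 0 < L) (f ψ : ℝ → ℝ)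
    (hf : IntegrableOn f (Set.Icc 0 L))
    (hψ : IntegrableOn ψ (Set.Icc 0 L))
    (hxf : IntegrableOn (fun x => x * f x) (Set.Icc 0 L))
    (hxψ : IntegrableOn (fun x => x * ψ x) (Set.Icc 0 L)) :
    (∫ x in Set.Icc 0 L, x *
        ((ψ x - 2 * ∫ y in Set.Icc x L, ψ y / y)
          - 2 * ((∫ y in Set.Icc 0 x, f y * ψ (x - y))
              - ψ x * (∫ y in Set.Icc 0 (L - x), f y)
              - f x * ∫ y in Set.Icc 0 (L - x), ψ y))) = 0 :=
  stmt_6_general L f ψ hf hψ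
end

section
/- If (f_i)_{i≥1} is a nonnegative summable sequence with m₀ = Σ_i f_i and b_i = Σ_{j≥i} f_j/(j+1), and f is an equilibrium of model D (i.e., 0 = Σ_{j=1}^{i−1} f_j f_{i−j} − (2m₀ + 1) f_i + 2 b_i for all i ≥ 1), then m₀ satisfies 0 = −m₀² + m₀ − 2 b₁, i.e., b₁ = (m₀ − m₀²)/2. -/
/-!
Sum the equilibrium equations over `i ≥ 1`. Since `f 0 = 0`, the convolution terms add up to
`m₀²` by the Cauchy product formula, and the loss terms to `(2 m₀ + 1) m₀`. Exchanging the order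
of summation, `∑_{i ≥ 0} b i = ∑_j (j + 1) f j / (j + 1) = m₀`, and `b 0 = b 1`, so the gain terms
add up to `2 (m₀ - b 1)`. Hence `0 = m₀² - (2 m₀ + 1) m₀ + 2 (m₀ - b 1)`.
-/

open Finset

theorem hasSum_ite_le {M : Type*} [AddCommMonoid M] [TopologicalSpace M] (j : ℕ) (c : M) :
    HasSum (fun i : ℕ ↦ if i ≤ j then c else 0) ((j + 1) • c) := by
  have := hasSum_sum_of_ne_finset_zero (L := .unconditional ℕ) (f := fun i ↦ if i ≤ j then c else 0)
    (s := range (j + 1)) fun i hi ↦ by simp_all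
  rwa [sum_ite_of_true fun i hi ↦ Nat.lt_succ_iff.1 (mem_range.1 hi), sum_const,
    card_range] at this

theorem hasSum_tsum_ite_le {a : ℕ → ℝ} (ha : Summable fun j : ℕ ↦ ((j : ℝ) + 1) * a j) :
    HasSum (fun i ↦ ∑' j, if i ≤ j then a j else 0) (∑' j : ℕ, ((j : ℝ) + 1) * a j) := by
  have hrow (j : ℕ) (c : ℝ) : HasSum (fun i : ℕ ↦ if i ≤ j then c else 0) (((j : ℝ) + 1) * c) := by
    simpa [nsmul_eq_mul] using hasSum_ite_le j c
  set F : ℕ → ℕ → ℝ := fun j i ↦ if i ≤ j then a j else 0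
  have hF : Summable (Function.uncurry F) := by
    refine .of_abs ((summable_prod_of_nonneg fun _ ↦ abs_nonneg _).2 ⟨fun j ↦ ?_, ?_⟩)
    · simpa [F, apply_ite] using (hrow j |a j|).summable
    · have hpos (j : ℕ) : |(j : ℝ) + 1| = j + 1 := abs_of_pos j.cast_add_one_pos
      simpa [F, apply_ite, (hrow _ _).tsum_eq, abs_mul, hpos] using ha.abs
  rw [← tsum_congr fun j ↦ (hrow j (a j)).tsum_eq, ← hF.tsum_comm]
  exact hF.prod_symm.prod.hasSum

theorem sum_Ico_one_mul_eq_sum_range {R : Type*} [NonUnitalNonAssocSemiring R] {f g : ℕ → R}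
    (hf : f 0 = 0) (hg : g 0 = 0) (n : ℕ) :
    ∑ k ∈ Ico 1 n, f k * g (n - k) = ∑ k ∈ range (n + 1), f k * g (n - k) := by
  rcases n.eq_zero_or_pos with rfl | hn
  · simp [hf]
  rw [sum_range_succ, range_eq_Ico, sum_eq_sum_Ico_succ_bot hn]
  simp [hf, hg]

theorem hasSum_sum_Ico_one_mul_succ {f g : ℕ → ℝ} (hf : Summable f) (hg : Summable g)
    (hf0 : f 0 = 0) (hg0 : g 0 = 0) :
    HasSum (fun n ↦ ∑ k ∈ Ico 1 (n + 1), f k * g (n + 1 - k)) ((∑' n, f n) * ∑' n, g n) := by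
  have hf' : Summable fun n ↦ ‖f n‖ := by simpa only [Real.norm_eq_abs] using hf.abs
  have hg' : Summable fun n ↦ ‖g n‖ := by simpa only [Real.norm_eq_abs] using hg.abs
  have hcauchy : HasSum (fun n ↦ ∑ k ∈ range (n + 1), f k * g (n - k))
      ((∑' n, f n) * ∑' n, g n) := by
    rw [tsum_mul_tsum_eq_tsum_sum_range_of_summable_norm hf' hg']
    exact (summable_norm_sum_mul_range_of_summable_norm hf' hg').of_norm.hasSum
  rw [← hasSum_nat_add_iff' 1] at hcauchy
  simpa [sum_Ico_one_mul_eq_sum_range hf0 hg0, hf0] using hcauchy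

theorem stmt_9_general (f : ℕ → ℝ) (b : ℕ → ℝ) (m₀ : ℝ)
    (hf0 : f 0 = 0)
    (hsum : Summable f)
    (hm₀ : m₀ = ∑' i : ℕ, f i)
    (hb : ∀ i, b i = ∑' j : ℕ, if i ≤ j then f j / ((j : ℝ) + 1) else 0)
    (hequi : ∀ i, 1 ≤ i →
      0 = (∑ j ∈ Finset.Ico 1 i, f j * f (i - j)) - (2 * m₀ + 1) * f i + 2 * b i) :
    b 1 = (m₀ - m₀ ^ 2) / 2 := by
  have hmass : HasSum (fun i ↦ f (i + 1)) m₀ := by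
    simpa [hf0, hm₀] using (hasSum_nat_add_iff' 1).2 hsum.hasSum
  have hconv := hasSum_sum_Ico_one_mul_succ hsum hsum hf0 hf0
  rw [← hm₀] at hconv
  have hweights (j : ℕ) : ((j : ℝ) + 1) * (f j / ((j : ℝ) + 1)) = f j :=
    mul_div_cancel₀ _ (Nat.cast_add_one_ne_zero j)
  have hb_sum : HasSum b m₀ := by
    simpa only [← hb, hweights, ← hm₀] using
      hasSum_tsum_ite_le (a := fun j ↦ f j / ((j : ℝ) + 1)) (by simpa only [hweights] using hsum)
  have hb0 : b 0 = b 1 := by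
    rw [hb, hb]
    refine tsum_congr fun j ↦ ?_
    rcases j with _ | j <;> simp [hf0]
  have hb_succ : HasSum (fun i ↦ b (i + 1)) (m₀ - b 1) := by
    simpa [hb0] using (hasSum_nat_add_iff' 1).2 hb_sum
  have htotal := (hconv.sub (hmass.mul_left (2 * m₀ + 1))).add (hb_succ.mul_left 2)
  have hzero : (fun i ↦ ∑ k ∈ Ico 1 (i + 1), f k * f (i + 1 - k) - (2 * m₀ + 1) * f (i + 1)
      + 2 * b (i + 1)) = 0 := funext fun i ↦ (hequi (i + 1) le_add_self).symm
  rw [hzero] at htotal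
  linear_combination -htotal.unique hasSum_zero / 2

/-- Summing the model D equilibrium equations (testing with φ ≡ 1) yields
`b₁ = (m₀ - m₀²)/2`. -/
theorem stmt_9 (f : ℕ → ℝ) (b : ℕ → ℝ) (m₀ : ℝ)
    (hf0 : f 0 = 0) (hfpos : ∀ i, 0 ≤ f i)
    (hsum : Summable f) (hsum1 : Summable (fun i : ℕ => (i : ℝ) * f i))
    (hm₀ : m₀ = ∑' i : ℕ, f i)
    (hb : ∀ i, b i = ∑' j : ℕ, if i ≤ j then f j / ((j : ℝ) + 1) else 0)
    (hequi : ∀ i, 1 ≤ i →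
      0 = (∑ j ∈ Finset.Ico 1 i, f j * f (i - j)) - (2 * m₀ + 1) * f i + 2 * b i) :
    b 1 = (m₀ - m₀ ^ 2) / 2 :=
  stmt_9_general f b m₀ hf0 hsum hm₀ hb hequi
end

section
/- With m₀(h) as above (solution of m₀/(1−m₀)³ = 1/h, i.e., m₁ = 1), the first term of the equilibrium sequence f₁^h = m₀(h)(1 − m₀(h))/(1 + 2 m₀(h)) satisfies (1/h) f₁^h · h^{2/3} → 1/3 as h → 0⁺. -/
open Filter

/-- The first term of the equilibrium sequence satisfies `f₁^h / h^{1/3} → 1/3`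
as `h → 0⁺` (with `m₁ = 1`). -/
theorem stmt_12 (m₀ : ℝ → ℝ)
    (hm₀ : ∀ h : ℝ, 0 < h →
      m₀ h ∈ Set.Ioo (0:ℝ) 1 ∧ m₀ h / (1 - m₀ h) ^ 3 = 1 / h) :
    Tendsto (fun h : ℝ =>
        (m₀ h * (1 - m₀ h) / (1 + 2 * m₀ h)) / h ^ ((1:ℝ)/3))
      (nhdsWithin 0 (Set.Ioi 0)) (nhds (1/3)) := by
  -- keys facts for h > 0
  have key : ∀ h : ℝ, 0 < h → 1 - m₀ h = h ^ ((1:ℝ)/3) * (m₀ h) ^ ((1:ℝ)/3) := by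
    intro h hh
    obtain ⟨⟨hm0, hm1⟩, heq⟩ := hm₀ h hh
    have hx : (0:ℝ) < 1 - m₀ h := by linarith
    have hcube : m₀ h * h = 1 * (1 - m₀ h) ^ 3 :=
      (div_eq_div_iff (pow_pos hx 3).ne' hh.ne').mp heq
    have hcube' : (1 - m₀ h) ^ (3:ℕ) = h * m₀ h := by
      linarith [hcube]
    have h13 : (h * m₀ h) ^ ((1:ℝ)/3) = 1 - m₀ h := by
      rw [← hcube', ← Real.rpow_natCast (1 - m₀ h) 3, ← Real.rpow_mul hx.le]
      norm_num
    rw [← Real.mul_rpow hh.le hm0.le, h13]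
  -- m₀ → 1
  have hroot : Tendsto (fun h : ℝ => h ^ ((1:ℝ)/3)) (nhdsWithin 0 (Set.Ioi 0)) (nhds 0) := by
    have : ContinuousAt (fun x : ℝ => x ^ ((1:ℝ)/3)) 0 :=
      Real.continuousAt_rpow_const 0 ((1:ℝ)/3) (Or.inr (by norm_num))
    have h2 := (this.continuousWithinAt (s := Set.Ioi 0)).tendsto
    simpa [Real.zero_rpow (by norm_num : ((1:ℝ)/3) ≠ 0)] using h2
  have hm_tendsto : Tendsto m₀ (nhdsWithin 0 (Set.Ioi 0)) (nhds 1) := by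
    apply tendsto_of_tendsto_of_tendsto_of_le_of_le'
      (g := fun h : ℝ => 1 - h ^ ((1:ℝ)/3)) (h := fun _ => (1:ℝ))
    · simpa using tendsto_const_nhds.sub hroot
    · exact tendsto_const_nhds
    · filter_upwards [self_mem_nhdsWithin] with h hh
      have hh : (0:ℝ) < h := hh
      obtain ⟨⟨hm0, hm1⟩, _⟩ := hm₀ h hh
      have hk := key h hh
      have hr : (0:ℝ) < h ^ ((1:ℝ)/3) := Real.rpow_pos_of_pos hh _
      have hle : (m₀ h) ^ ((1:ℝ)/3) ≤ 1 := by
        have := Real.rpow_le_one hm0.le hm1.le (by norm_num : (0:ℝ) ≤ (1:ℝ)/3)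
        exact this
      nlinarith [hk, mul_le_of_le_one_right hr.le hle]
    · filter_upwards [self_mem_nhdsWithin] with h hh
      exact (hm₀ h hh).1.2.le
  -- rewrite the function on Ioi 0
  have heqfun : (fun h : ℝ =>
      (m₀ h * (1 - m₀ h) / (1 + 2 * m₀ h)) / h ^ ((1:ℝ)/3)) =ᶠ[nhdsWithin 0 (Set.Ioi 0)]
      fun h : ℝ => m₀ h * (m₀ h) ^ ((1:ℝ)/3) / (1 + 2 * m₀ h) := by
    filter_upwards [self_mem_nhdsWithin] with h hh
    have hh : (0:ℝ) < h := hh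
    obtain ⟨⟨hm0, hm1⟩, _⟩ := hm₀ h hh
    have hr : (0:ℝ) < h ^ ((1:ℝ)/3) := Real.rpow_pos_of_pos hh _
    have hd : (1:ℝ) + 2 * m₀ h ≠ 0 := by nlinarith
    rw [key h hh]
    field_simp
  -- limit of the simplified function
  have hF : Tendsto (fun m : ℝ => m * m ^ ((1:ℝ)/3) / (1 + 2 * m)) (nhds 1) (nhds (1/3)) := by
    have hc : ContinuousAt (fun m : ℝ => m * m ^ ((1:ℝ)/3) / (1 + 2 * m)) 1 := by
      apply ContinuousAt.div
      · exact continuousAt_id.mul (Real.continuousAt_rpow_const 1 _ (Or.inl one_ne_zero))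
      · fun_prop
      · norm_num
    have := hc.tendsto
    simpa [Real.one_rpow, show (1:ℝ)+2 = 3 by norm_num] using this
  exact Tendsto.congr' heqfun.symm (hF.comp hm_tendsto)
end

section
/- Let Q_{C_T}(f)(x) = ∫_0^x f(y) f(x−y) dy − 2 f(x) ∫_0^{L−x} f(y) dy and Q_{F_T}(f)(x) = 2∫_x^L f(y)/y dy − f(x) on [0,L]. Then the map f ↦ Q_{C_T}(f) + Q_{F_T}(f) is locally Lipschitz from L¹([0,L]) to L¹([0,L]): for every R > 0 there is a constant C(R,L) such that ‖Q(f) − Q(g)‖_{L¹} ≤ C ‖f − g‖_{L¹} for all f, g with ‖f‖_{L¹}, ‖g‖_{L¹} ≤ R. -/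
/-!
Extend `f` by zero outside `[0, L]`: this does not change `Q(f)` on `[0, L]` and turns the
truncated convolution `∫_0^x f(y) f(x-y) dy` into the convolution `f ⋆ f` on `ℝ`. With `d = f - g`,
almost everywhere on `[0, L]`
`Q(f) - Q(g) = f ⋆ d + d ⋆ g - 2 (d · M f + g · M d) + 2 F d - d`,
where `M u x = ∫_0^{L-x} u` and `F u x = ∫_x^L u(y)/y dy`. Each term is bounded in `L¹` by a product
of `L¹` norms: Young's inequality `‖u ⋆ v‖₁ ≤ ‖u‖₁ ‖v‖₁`, the pointwise bound `|M u| ≤ ‖u‖₁`, and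
Tonelli, `∫_0^L ∫_x^L |u(y)|/y dy dx = ∫_0^L |u|`. Hence
`‖Q(f) - Q(g)‖₁ ≤ (3 (‖f‖₁ + ‖g‖₁) + 3) ‖f - g‖₁`, and since `Q(0) = 0` the case `g = 0` shows that
`Q(f)` is integrable.
-/

open MeasureTheory

/-- The coagulation-fragmentation operator of the truncated model C',
`Q(f) = Q_{C_T}(f) + Q_{F_T}(f)`. -/
noncomputable def QCF (L : ℝ) (f : ℝ → ℝ) (x : ℝ) : ℝ :=
  (∫ y in Set.Icc 0 x, f y * f (x - y)) - 2 * f x * (∫ y in Set.Icc 0 (L - x), f y)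
    + (2 * (∫ y in Set.Icc x L, f y / y) - f x)

open Set ContinuousLinearMap
open scoped Convolution ENNReal

def HasL1Bound {α : Type*} [MeasurableSpace α] (μ : Measure α) (u : α → ℝ) (c : ℝ) : Prop :=
  Integrable u μ ∧ ∫ x, |u x| ∂μ ≤ c

section HasL1Bound

variable {α : Type*} [MeasurableSpace α] {μ : Measure α} {u v : α → ℝ} {a b c : ℝ}

theorem integral_abs_indicator {s : Set α} (hs : MeasurableSet s) (u : α → ℝ) :
    ∫ x, |s.indicator u x| ∂μ = ∫ x in s, |u x| ∂μ := by
  simp only [← Real.norm_eq_abs, norm_indicator_eq_indicator_norm, integral_indicator hs]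

theorem MeasureTheory.Integrable.hasL1Bound_restrict (hu : Integrable u μ) (s : Set α) :
    HasL1Bound (μ.restrict s) u (∫ x, |u x| ∂μ) :=
  ⟨hu.restrict, setIntegral_le_integral hu.abs (ae_of_all _ fun _ => abs_nonneg _)⟩

theorem HasL1Bound.mono (hu : HasL1Bound μ u a) (hab : a ≤ b) : HasL1Bound μ u b :=
  ⟨hu.1, hu.2.trans hab⟩

theorem HasL1Bound.congr (hu : HasL1Bound μ u a) (huv : u =ᵐ[μ] v) : HasL1Bound μ v a :=
  ⟨hu.1.congr huv, (integral_congr_ae (huv.mono fun _ hx => by rw [hx])).symm.trans_le hu.2⟩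

theorem HasL1Bound.add (hu : HasL1Bound μ u a) (hv : HasL1Bound μ v b) :
    HasL1Bound μ (fun x => u x + v x) (a + b) := by
  refine ⟨hu.1.add hv.1, ?_⟩
  calc ∫ x, |u x + v x| ∂μ ≤ ∫ x, (|u x| + |v x|) ∂μ :=
        integral_mono (hu.1.add hv.1).abs (hu.1.abs.add hv.1.abs) fun _ => abs_add_le _ _
    _ = ∫ x, |u x| ∂μ + ∫ x, |v x| ∂μ := integral_add hu.1.abs hv.1.abs
    _ ≤ a + b := add_le_add hu.2 hv.2

theorem HasL1Bound.const_mul (hu : HasL1Bound μ u a) (c : ℝ) :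
    HasL1Bound μ (fun x => c * u x) (|c| * a) := by
  refine ⟨hu.1.const_mul c, ?_⟩
  simp only [abs_mul, integral_const_mul]
  exact mul_le_mul_of_nonneg_left hu.2 (abs_nonneg c)

theorem HasL1Bound.sub (hu : HasL1Bound μ u a) (hv : HasL1Bound μ v b) :
    HasL1Bound μ (fun x => u x - v x) (a + b) :=
  ((hu.add (hv.const_mul (-1))).congr (ae_of_all _ fun _ => by ring)).mono (by simp)

theorem HasL1Bound.mul_of_abs_le (hu : HasL1Bound μ u a) (hv : AEStronglyMeasurable v μ)
    (hvb : ∀ᵐ x ∂μ, |v x| ≤ b) (hb : 0 ≤ b) : HasL1Bound μ (fun x => u x * v x) (b * a) := by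
  refine ⟨hu.1.mul_bdd hv hvb, ?_⟩
  calc ∫ x, |u x * v x| ∂μ ≤ ∫ x, b * |u x| ∂μ := by
        refine integral_mono_ae (hu.1.mul_bdd hv hvb).abs (hu.1.abs.const_mul b) ?_
        filter_upwards [hvb] with x hx
        rw [abs_mul, mul_comm b]
        exact mul_le_mul_of_nonneg_left hx (abs_nonneg _)
    _ ≤ b * a := by
        rw [integral_const_mul]
        exact mul_le_mul_of_nonneg_left hu.2 hb

theorem hasL1Bound_of_lintegral_le (hu : AEStronglyMeasurable u μ) (hc : 0 ≤ c)
    (h : ∫⁻ x, ‖u x‖ₑ ∂μ ≤ ENNReal.ofReal c) : HasL1Bound μ u c := by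
  refine ⟨⟨hu, h.trans_lt ENNReal.ofReal_lt_top⟩, ?_⟩
  simp only [← Real.norm_eq_abs]
  rw [integral_norm_eq_lintegral_enorm hu]
  exact ENNReal.toReal_le_of_le_ofReal hc h

end HasL1Bound

section Convolution

variable {f g : ℝ → ℝ}

theorem abs_convolution_le (x : ℝ) :
    |(f ⋆ g) x| ≤ ((fun t => |f t|) ⋆ fun t => |g t|) x := by
  simp only [convolution_def, lsmul_apply, smul_eq_mul, ← abs_mul]
  exact abs_integral_le_integral_abs

theorem integral_abs_convolution_le (hf : Integrable f) (hg : Integrable g) :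
    ∫ x, |(f ⋆ g) x| ≤ (∫ x, |f x|) * ∫ x, |g x| := by
  calc ∫ x, |(f ⋆ g) x| ≤ ∫ x, ((fun t => |f t|) ⋆ fun t => |g t|) x :=
        integral_mono (hf.integrable_convolution _ hg).abs
          (hf.abs.integrable_convolution _ hg.abs) abs_convolution_le
    _ = (∫ x, |f x|) * ∫ x, |g x| := integral_convolution _ hf.abs hg.abs

theorem hasL1Bound_convolution (hf : Integrable f) (hg : Integrable g) (s : Set ℝ) :
    HasL1Bound (volume.restrict s) (f ⋆ g) ((∫ x, |f x|) * ∫ x, |g x|) :=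
  ((hf.integrable_convolution _ hg).hasL1Bound_restrict s).mono
    (integral_abs_convolution_le hf hg)

theorem convolution_sub_convolution_ae_eq (hf : Integrable f) (hg : Integrable g) :
    ∀ᵐ x, (f ⋆ f) x - (g ⋆ g) x = (f ⋆ (f - g)) x + ((f - g) ⋆ g) x := by
  filter_upwards [hf.ae_convolution_exists (lsmul ℝ ℝ) hf,
    hf.ae_convolution_exists (lsmul ℝ ℝ) hg, hg.ae_convolution_exists (lsmul ℝ ℝ) hg]
    with x hff hfg hgg
  simp only [ConvolutionExistsAt, lsmul_apply, smul_eq_mul] at hff hfg hgg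
  simp only [convolution_def, lsmul_apply, smul_eq_mul, Pi.sub_apply, mul_sub, sub_mul]
  rw [integral_sub hff hfg, integral_sub hfg hgg]
  ring

theorem convolution_eq_setIntegral_Icc (hf : ∀ t < 0, f t = 0) (hg : ∀ t < 0, g t = 0)
    (x : ℝ) : (f ⋆ g) x = ∫ y in Icc 0 x, f y * g (x - y) := by
  rw [convolution_def, ← integral_indicator measurableSet_Icc]
  congr 1 with y
  simp only [lsmul_apply, smul_eq_mul, indicator_apply, mem_Icc]
  split_ifs with hy
  · rfl
  · rcases not_and_or.mp hy with hy | hy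
    · rw [hf y (not_le.mp hy), zero_mul]
    · rw [hg (x - y) (by linarith [not_le.mp hy]), mul_zero]

end Convolution

noncomputable def massIntegral (L : ℝ) (f : ℝ → ℝ) (x : ℝ) : ℝ := ∫ y in Icc 0 (L - x), f y

noncomputable def fragIntegral (L : ℝ) (f : ℝ → ℝ) (x : ℝ) : ℝ := ∫ y in Icc x L, f y / y

theorem Ici_inter_Icc_of_le {α : Type*} [LinearOrder α] {a b c : α} (h : b ≤ a) :
    Ici a ∩ Icc b c = Icc a c := by
  ext y
  simp only [mem_inter_iff, mem_Ici, mem_Icc]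
  exact ⟨fun hy => ⟨hy.1, hy.2.2⟩, fun hy => ⟨hy.1, h.trans hy.1, hy.2⟩⟩

theorem Iic_inter_Icc_of_le {α : Type*} [LinearOrder α] {a b c : α} (h : a ≤ c) :
    Iic a ∩ Icc b c = Icc b a := by
  ext y
  simp only [mem_inter_iff, mem_Iic, mem_Icc]
  exact ⟨fun hy => ⟨hy.2.1, hy.1⟩, fun hy => ⟨hy.2, hy.1, hy.2.trans h⟩⟩

section MassAndFragmentation

variable {L x : ℝ} {f g : ℝ → ℝ}

theorem setIntegral_Icc_sub_eq_integral_indicator (hx : 0 ≤ x) (h : ℝ → ℝ) :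
    ∫ y in Icc 0 (L - x), h y = ∫ y in Icc 0 L, (Iic (L - x)).indicator h y := by
  rw [integral_indicator measurableSet_Iic, Measure.restrict_restrict measurableSet_Iic,
    Iic_inter_Icc_of_le (by linarith)]

theorem setIntegral_Icc_eq_integral_indicator (hx : 0 ≤ x) (h : ℝ → ℝ) :
    ∫ y in Icc x L, h y = ∫ y in Icc 0 L, (Ici x).indicator h y := by
  rw [integral_indicator measurableSet_Ici, Measure.restrict_restrict measurableSet_Ici,
    Ici_inter_Icc_of_le hx]

theorem aestronglyMeasurable_massIntegral (hf : IntegrableOn f (Icc 0 L)) :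
    AEStronglyMeasurable (massIntegral L f) (volume.restrict (Icc 0 L)) := by
  have hK := (hf.1.comp_snd (μ := volume.restrict (Icc 0 L))).indicator
    (measurableSet_le measurable_snd (measurable_const.sub measurable_fst) :
      MeasurableSet {p : ℝ × ℝ | p.2 ≤ L - p.1})
  refine hK.integral_prod_right'.congr ?_
  filter_upwards [ae_restrict_mem measurableSet_Icc] with x hx
  exact (setIntegral_Icc_sub_eq_integral_indicator hx.1 f).symm

theorem aestronglyMeasurable_fragIntegral (hf : IntegrableOn f (Icc 0 L)) :
    AEStronglyMeasurable (fragIntegral L f) (volume.restrict (Icc 0 L)) := by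
  have hK := ((hf.1.comp_snd (μ := volume.restrict (Icc 0 L))).div₀
    measurable_snd.aestronglyMeasurable).indicator
    (measurableSet_le measurable_fst measurable_snd : MeasurableSet {p : ℝ × ℝ | p.1 ≤ p.2})
  refine hK.integral_prod_right'.congr ?_
  filter_upwards [ae_restrict_mem measurableSet_Icc] with x hx
  exact (setIntegral_Icc_eq_integral_indicator hx.1 _).symm

theorem abs_massIntegral_le (hf : IntegrableOn f (Icc 0 L)) (hx : 0 ≤ x) :
    |massIntegral L f x| ≤ ∫ y in Icc 0 L, |f y| :=
  (abs_integral_le_integral_abs).trans <| setIntegral_mono_set hf.abs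
    (ae_of_all _ fun _ => abs_nonneg _) (Icc_subset_Icc_right (by linarith)).eventuallyLE

theorem massIntegral_sub (hf : IntegrableOn f (Icc 0 L)) (hg : IntegrableOn g (Icc 0 L))
    (hx : 0 ≤ x) : massIntegral L f x - massIntegral L g x = massIntegral L (f - g) x :=
  have hsub : Icc 0 (L - x) ⊆ Icc 0 L := Icc_subset_Icc_right (by linarith)
  (integral_sub (hf.mono_set hsub) (hg.mono_set hsub)).symm

theorem integrableOn_Icc_div (hf : IntegrableOn f (Icc 0 L)) (hx : 0 < x) :
    IntegrableOn (fun y => f y / y) (Icc x L) := by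
  simpa only [div_eq_mul_inv] using (hf.mono_set (Icc_subset_Icc_left hx.le)).mul_continuousOn
    (continuousOn_inv₀.mono fun y hy => (hx.trans_le hy.1).ne') isCompact_Icc

theorem fragIntegral_sub (hf : IntegrableOn f (Icc 0 L)) (hg : IntegrableOn g (Icc 0 L))
    (hx : 0 < x) : fragIntegral L f x - fragIntegral L g x = fragIntegral L (f - g) x := by
  simp only [fragIntegral, Pi.sub_apply, sub_div]
  exact (integral_sub (integrableOn_Icc_div hf hx) (integrableOn_Icc_div hg hx)).symm

theorem lintegral_Icc_lintegral_Icc_eq {k : ℝ → ℝ≥0∞}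
    (hk : AEMeasurable k (volume.restrict (Icc 0 L))) :
    ∫⁻ x in Icc 0 L, ∫⁻ y in Icc x L, k y = ∫⁻ y in Icc 0 L, ENNReal.ofReal y * k y := by
  have hK : AEMeasurable (Function.uncurry fun x y => (Ici x).indicator k y)
      ((volume.restrict (Icc 0 L)).prod (volume.restrict (Icc 0 L))) :=
    (hk.comp_snd).indicator (measurableSet_le measurable_fst measurable_snd)
  calc ∫⁻ x in Icc 0 L, ∫⁻ y in Icc x L, k y
      = ∫⁻ x in Icc 0 L, ∫⁻ y in Icc 0 L, (Ici x).indicator k y := by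
        refine setLIntegral_congr_fun measurableSet_Icc fun x hx => ?_
        rw [lintegral_indicator measurableSet_Ici, Measure.restrict_restrict measurableSet_Ici,
          Ici_inter_Icc_of_le hx.1]
    _ = ∫⁻ y in Icc 0 L, ∫⁻ x in Icc 0 L, (Iic y).indicator (fun _ => k y) x :=
        lintegral_lintegral_swap hK
    _ = ∫⁻ y in Icc 0 L, ENNReal.ofReal y * k y := by
        refine setLIntegral_congr_fun measurableSet_Icc fun y hy => ?_
        rw [lintegral_indicator_const measurableSet_Iic, Measure.restrict_apply measurableSet_Iic,
          Iic_inter_Icc_of_le hy.2, Real.volume_Icc, sub_zero, mul_comm]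

theorem hasL1Bound_fragIntegral (hf : IntegrableOn f (Icc 0 L)) :
    HasL1Bound (volume.restrict (Icc 0 L)) (fragIntegral L f) (∫ y in Icc 0 L, |f y|) := by
  have hdiv : ∀ y, 0 ≤ y → ENNReal.ofReal y * ‖f y / y‖ₑ ≤ ‖f y‖ₑ := fun y hy => by
    rw [← Real.enorm_eq_ofReal hy, ← enorm_mul]
    rcases hy.eq_or_lt with rfl | hy
    · simp
    · rw [mul_div_cancel₀ _ hy.ne']
  refine hasL1Bound_of_lintegral_le (aestronglyMeasurable_fragIntegral hf)
    (integral_nonneg fun _ => abs_nonneg _) ?_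
  calc ∫⁻ x in Icc 0 L, ‖fragIntegral L f x‖ₑ
      ≤ ∫⁻ x in Icc 0 L, ∫⁻ y in Icc x L, ‖f y / y‖ₑ :=
        lintegral_mono fun _ => enorm_integral_le_lintegral_enorm _
    _ = ∫⁻ y in Icc 0 L, ENNReal.ofReal y * ‖f y / y‖ₑ :=
        lintegral_Icc_lintegral_Icc_eq (hf.1.div₀ measurable_id.aestronglyMeasurable).enorm
    _ ≤ ∫⁻ y in Icc 0 L, ‖f y‖ₑ :=
        setLIntegral_mono' measurableSet_Icc fun y hy => hdiv y hy.1
    _ = ENNReal.ofReal (∫ y in Icc 0 L, |f y|) :=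
        (ofReal_integral_norm_eq_lintegral_enorm hf).symm

end MassAndFragmentation

section QCF

variable {L x : ℝ} {f g : ℝ → ℝ}

theorem QCF_indicator_Icc (hx : x ∈ Icc 0 L) :
    QCF L ((Icc 0 L).indicator f) x = QCF L f x := by
  have hf : ∀ y ∈ Icc 0 L, (Icc 0 L).indicator f y = f y := fun y hy => indicator_of_mem hy f
  have hconv : EqOn (fun y => (Icc 0 L).indicator f y * (Icc 0 L).indicator f (x - y))
      (fun y => f y * f (x - y)) (Icc 0 x) := fun y hy => by
    dsimp only
    rw [hf y ⟨hy.1, hy.2.trans hx.2⟩, hf (x - y) ⟨by linarith [hy.2], by linarith [hy.1, hx.2]⟩]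
  have hmass : EqOn ((Icc 0 L).indicator f) f (Icc 0 (L - x)) := fun y hy =>
    hf y ⟨hy.1, by linarith [hy.2, hx.1]⟩
  have hfrag : EqOn (fun y => (Icc 0 L).indicator f y / y) (fun y => f y / y) (Icc x L) :=
    fun y hy => by dsimp only; rw [hf y ⟨hx.1.trans hy.1, hy.2⟩]
  simp only [QCF]
  rw [setIntegral_congr_fun measurableSet_Icc hconv, setIntegral_congr_fun measurableSet_Icc hmass,
    setIntegral_congr_fun measurableSet_Icc hfrag, hf x hx]

theorem QCF_eq_convolution (hf : ∀ t < 0, f t = 0) (x : ℝ) :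
    QCF L f x = (f ⋆ f) x - 2 * f x * massIntegral L f x + (2 * fragIntegral L f x - f x) := by
  rw [convolution_eq_setIntegral_Icc hf hf]
  rfl

theorem hasL1Bound_QCF_sub_of_integrable (hf : Integrable f) (hg : Integrable g)
    (hf0 : ∀ t < 0, f t = 0) (hg0 : ∀ t < 0, g t = 0) :
    HasL1Bound (volume.restrict (Icc 0 L)) (fun x => QCF L f x - QCF L g x)
      ((3 * ((∫ x, |f x|) + ∫ x, |g x|) + 3) * ∫ x, |f x - g x|) := by
  have hd : Integrable (f - g) := hf.sub hg
  have habs_le : ∀ {u : ℝ → ℝ}, Integrable u → ∫ y in Icc 0 L, |u y| ≤ ∫ y, |u y| :=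
    fun hu => setIntegral_le_integral hu.abs (ae_of_all _ fun _ => abs_nonneg _)
  have hmass_le : ∀ {u : ℝ → ℝ}, Integrable u →
      ∀ᵐ x ∂volume.restrict (Icc 0 L), |massIntegral L u x| ≤ ∫ y, |u y| := fun hu => by
    filter_upwards [ae_restrict_mem measurableSet_Icc] with x hx
    exact (abs_massIntegral_le hu.integrableOn hx.1).trans (habs_le hu)
  have hconv := (hasL1Bound_convolution hf hd (Icc 0 L)).add (hasL1Bound_convolution hd hg _)
  have hmass := ((hd.hasL1Bound_restrict _).mul_of_abs_le
    (aestronglyMeasurable_massIntegral hf.integrableOn) (hmass_le hf)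
      (integral_nonneg fun _ => abs_nonneg _)).add
    ((hg.hasL1Bound_restrict _).mul_of_abs_le
      (aestronglyMeasurable_massIntegral hd.integrableOn) (hmass_le hd)
      (integral_nonneg fun _ => abs_nonneg _))
  have hfrag := (hasL1Bound_fragIntegral hd.integrableOn).mono (habs_le hd)
  refine (((hconv.sub (hmass.const_mul 2)).add
    ((hfrag.const_mul 2).sub (hd.hasL1Bound_restrict _))).congr ?_).mono
    (le_of_eq (by rw [abs_two]; simp only [Pi.sub_apply]; ring))
  filter_upwards [ae_restrict_mem measurableSet_Icc,
    ae_restrict_of_ae (convolution_sub_convolution_ae_eq hf hg),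
    ae_restrict_of_ae (Measure.ae_ne volume 0)] with x hx hconv hx0
  rw [QCF_eq_convolution hf0, QCF_eq_convolution hg0, ← hconv,
    ← massIntegral_sub hf.integrableOn hg.integrableOn hx.1,
    ← fragIntegral_sub hf.integrableOn hg.integrableOn (hx.1.lt_of_ne' hx0)]
  simp only [Pi.sub_apply]
  ring

theorem hasL1Bound_QCF_sub (hf : IntegrableOn f (Icc 0 L)) (hg : IntegrableOn g (Icc 0 L)) :
    HasL1Bound (volume.restrict (Icc 0 L)) (fun x => QCF L f x - QCF L g x)
      ((3 * ((∫ x in Icc 0 L, |f x|) + ∫ x in Icc 0 L, |g x|) + 3) *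
        ∫ x in Icc 0 L, |f x - g x|) := by
  have hvanish : ∀ u : ℝ → ℝ, ∀ t < 0, (Icc 0 L).indicator u t = 0 :=
    fun u t ht => indicator_of_notMem (fun h => (h.1.trans_lt ht).false) u
  refine ((hasL1Bound_QCF_sub_of_integrable ((integrable_indicator_iff measurableSet_Icc).2 hf)
    ((integrable_indicator_iff measurableSet_Icc).2 hg) (hvanish f) (hvanish g)).congr ?_).mono
      (le_of_eq ?_)
  · filter_upwards [ae_restrict_mem measurableSet_Icc] with x hx
    rw [QCF_indicator_Icc hx, QCF_indicator_Icc hx]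
  · rw [← integral_abs_indicator measurableSet_Icc f, ← integral_abs_indicator measurableSet_Icc g,
      ← integral_abs_indicator measurableSet_Icc fun x => f x - g x, indicator_sub]

theorem QCF_zero (L : ℝ) : QCF L 0 = 0 := by
  ext x
  simp [QCF]

end QCF

theorem stmt_16_general (L : ℝ) :
    ∀ R : ℝ, 0 < R → ∃ C : ℝ,
      ∀ f g : ℝ → ℝ, IntegrableOn f (Set.Icc 0 L) → IntegrableOn g (Set.Icc 0 L) →
        (∫ x in Set.Icc 0 L, |f x|) ≤ R → (∫ x in Set.Icc 0 L, |g x|) ≤ R →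
        IntegrableOn (QCF L f) (Set.Icc 0 L) ∧
        (∫ x in Set.Icc 0 L, |QCF L f x - QCF L g x|)
          ≤ C * ∫ x in Set.Icc 0 L, |f x - g x| := by
  intro R _
  refine ⟨6 * R + 3, fun f g hf hg hfR hgR => ⟨?_, ?_⟩⟩
  · have h := (hasL1Bound_QCF_sub (g := 0) hf integrableOn_zero).1
    simp only [QCF_zero, Pi.zero_apply, sub_zero] at h
    exact h
  · exact (hasL1Bound_QCF_sub hf hg).2.trans
      (mul_le_mul_of_nonneg_right (by linarith) (integral_nonneg fun _ => abs_nonneg _))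

/-- The map `f ↦ Q_{C_T}(f) + Q_{F_T}(f)` is locally Lipschitz on L¹([0,L]). -/
theorem stmt_16 (L : ℝ) (hL : 0 < L) :
    ∀ R : ℝ, 0 < R → ∃ C : ℝ,
      ∀ f g : ℝ → ℝ, IntegrableOn f (Set.Icc 0 L) → IntegrableOn g (Set.Icc 0 L) →
        (∫ x in Set.Icc 0 L, |f x|) ≤ R → (∫ x in Set.Icc 0 L, |g x|) ≤ R →
        IntegrableOn (QCF L f) (Set.Icc 0 L) ∧
        (∫ x in Set.Icc 0 L, |QCF L f x - QCF L g x|)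
          ≤ C * ∫ x in Set.Icc 0 L, |f x - g x| :=
  stmt_16_general L
end
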